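/- For every real x > 0, the Gamma function satisfies sqrt(2e) * ((x+1/2)/e)^(x+1/2) ≤ Γ(x+1) ≤ sqrt(2π) * ((x+1/2)/e)^(x+1/2). -/

import Mathlib

open Real Filter Finset Set Topology Nat

noncomputable def Lf (t : ℝ) : ℝ := t * Real.log t - t

lemma lf_hasDeriv {t : ℝ} (ht : t ≠ 0) : HasDerivAt Lf (Real.log t) t := by
  have := (Real.hasDerivAt_mul_log ht).sub (hasDerivAt_id t)
  exact (by simpa using this : HasDerivAt ((fun x => x * Real.log x) - id) (Real.log t) t)

lemma two_mul_le {u : ℝ} (h0 : 0 ≤ u) (h1 : u < 1) :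
    2 * u ≤ Real.log (1 + u) - Real.log (1 - u) := by
  set F : ℝ → ℝ := fun u => Real.log (1 + u) - Real.log (1 - u) - 2 * u with hF
  have hder : ∀ v ∈ Ioo (0:ℝ) 1, HasDerivAt F (1/(1+v) + 1/(1-v) - 2) v := by
    intro v hv
    have h1v : (1:ℝ) + v ≠ 0 := by nlinarith [hv.1]
    have h2v : (1:ℝ) - v ≠ 0 := by nlinarith [hv.2]
    have d1 : HasDerivAt (fun u : ℝ => Real.log (1 + u)) (1/(1+v)) v := by
      have := ((hasDerivAt_id v).const_add 1).log h1v
      simpa [one_div] using this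
    have d2 : HasDerivAt (fun u : ℝ => Real.log (1 - u)) (-(1/(1-v))) v := by
      have := ((hasDerivAt_id v).const_sub 1).log h2v
      simp only [id] at this
      convert this using 1
      field_simp
    have d3 : HasDerivAt (fun u : ℝ => 2 * u) 2 v := by
      simpa using (hasDerivAt_id v).const_mul 2
    have := (d1.sub d2).sub d3
    have e : (1/(1+v) + 1/(1-v) - 2 : ℝ) = 1/(1+v) - -(1/(1-v)) - 2 := by ring
    rw [e]; exact this
  have hmono : MonotoneOn F (Ico (0:ℝ) 1) := by
    apply monotoneOn_of_deriv_nonneg (convex_Ico 0 1)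
    · apply ContinuousOn.sub
      apply ContinuousOn.sub
      · exact ContinuousOn.log (by fun_prop)
          (fun u hu => by have := hu.1; show (1:ℝ) + u ≠ 0; positivity)
      · exact ContinuousOn.log (by fun_prop)
          (fun u hu => by have := hu.2; show (1:ℝ) - u ≠ 0; intro h; nlinarith)
      · exact continuousOn_const.mul continuousOn_id
    · rw [interior_Ico]
      exact fun v hv => (hder v hv).differentiableAt.differentiableWithinAt
    · rw [interior_Ico]
      intro v hv
      rw [(hder v hv).deriv]
      have h2 : (0:ℝ) < 1 - v := by linarith [hv.2]
      have h1 : (0:ℝ) < 1 + v := by linarith [hv.1]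
      rw [div_add_div _ _ (ne_of_gt h1) (ne_of_gt h2), le_sub_iff_add_le, zero_add,
        le_div_iff₀ (by positivity)]
      nlinarith [hv.1, hv.2]
  have h0' : (0:ℝ) ∈ Ico (0:ℝ) 1 := ⟨le_refl _, one_pos⟩
  have hu' : u ∈ Ico (0:ℝ) 1 := ⟨h0, h1⟩
  have := hmono h0' hu' h0
  simp only [hF] at this
  simp only [add_zero, sub_zero, Real.log_one, mul_zero] at this
  linarith

lemma key_t {t : ℝ} (ht : 1/2 < t) : 1/t ≤ Real.log (t + 1/2) - Real.log (t - 1/2) := by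
  have ht0 : (0:ℝ) < t := by linarith
  have hu0 : (0:ℝ) ≤ 1/(2*t) := by positivity
  have hu1 : 1/(2*t) < 1 := by rw [div_lt_one (by linarith)]; linarith
  have h := two_mul_le hu0 hu1
  have e1 : 1 + 1/(2*t) = (t + 1/2)/t := by field_simp
  have e2 : 1 - 1/(2*t) = (t - 1/2)/t := by field_simp
  rw [e1, e2, Real.log_div (by linarith) (ne_of_gt ht0),
    Real.log_div (by linarith) (ne_of_gt ht0)] at h
  have : 2 * (1/(2*t)) = 1/t := by field_simp
  rw [this] at h
  linarith

lemma phi_hasDeriv {t : ℝ} (ht : 1/2 < t) :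
    HasDerivAt (fun t => Lf (t + 1/2) - Lf (t - 1/2) - Real.log t)
      (Real.log (t + 1/2) - Real.log (t - 1/2) - 1/t) t := by
  have ht0 : (0:ℝ) < t := by linarith
  have d1 : HasDerivAt (fun t : ℝ => Lf (t + 1/2)) (Real.log (t + 1/2)) t := by
    have := (lf_hasDeriv (by positivity : t + 1/2 ≠ 0)).comp t
      ((hasDerivAt_id t).add_const (1/2))
    simpa [Function.comp_def] using this
  have d2 : HasDerivAt (fun t : ℝ => Lf (t - 1/2)) (Real.log (t - 1/2)) t := by
    have := (lf_hasDeriv (ne_of_gt (by linarith : (0:ℝ) < t - 1/2))).comp t ((hasDerivAt_id t).sub_const (1/2))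
    simpa [Function.comp_def] using this
  have d3 : HasDerivAt Real.log (1/t) t := by
    simpa [one_div] using Real.hasDerivAt_log (ne_of_gt ht0)
  exact (d1.sub d2).sub d3

lemma phi_mono : MonotoneOn (fun t => Lf (t + 1/2) - Lf (t - 1/2) - Real.log t)
    (Ioi (1/2 : ℝ)) := by
  apply monotoneOn_of_deriv_nonneg (convex_Ioi _)
  · exact fun t ht => (phi_hasDeriv ht).continuousAt.continuousWithinAt
  · rw [interior_Ioi]
    exact fun t ht => (phi_hasDeriv ht).differentiableAt.differentiableWithinAt
  · rw [interior_Ioi]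
    intro t ht
    rw [(phi_hasDeriv ht).deriv]
    have := key_t ht
    linarith

lemma tendsto_aux (γ : ℝ) (hγ : 0 ≤ γ) :
    Tendsto (fun n : ℕ => ((n:ℝ) + γ) * Real.log (1 + γ / n)) atTop (𝓝 γ) := by
  have T1 : Tendsto (fun n : ℕ => (n:ℝ) * Real.log (1 + γ / n)) atTop (𝓝 γ) :=
    (Real.tendsto_mul_log_one_add_div_atTop γ).comp tendsto_natCast_atTop_atTop
  have T0 : Tendsto (fun n : ℕ => Real.log (1 + γ / n)) atTop (𝓝 0) := by
    have : Tendsto (fun n : ℕ => 1 + γ / (n:ℝ)) atTop (𝓝 1) := by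
      simpa using tendsto_const_nhds.add (tendsto_const_div_atTop_nhds_zero_nat γ)
    simpa [Function.comp_def] using (Real.continuousAt_log one_ne_zero).tendsto.comp this
  have T2 : Tendsto (fun n : ℕ => γ * Real.log (1 + γ / n)) atTop (𝓝 0) := by
    simpa using T0.const_mul γ
  have := T1.add T2
  rw [add_zero] at this
  refine this.congr fun n => by ring

lemma tendsto_E {a b : ℝ} (ha : 0 < a) (hb : 0 < b) :
    Tendsto (fun n : ℕ => (b - a) * Real.log n - Lf (b + n + 1/2) + Lf (a + n + 1/2))
      atTop (𝓝 0) := by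
  have key : ∀ᶠ n : ℕ in atTop,
      (b - a) - ((n:ℝ) + (b + 1/2)) * Real.log (1 + (b + 1/2) / n)
        + ((n:ℝ) + (a + 1/2)) * Real.log (1 + (a + 1/2) / n)
      = (b - a) * Real.log n - Lf (b + n + 1/2) + Lf (a + n + 1/2) := by
    filter_upwards [eventually_ge_atTop 1] with n hn
    have hn0 : (0:ℝ) < n := by exact_mod_cast hn
    have hsplit : ∀ γ : ℝ, 0 < γ → Lf (γ + n + 1/2) =
        ((n:ℝ) + (γ + 1/2)) * (Real.log n + Real.log (1 + (γ + 1/2) / n)) - (n + (γ + 1/2)) := by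
      intro γ hγ
      have h1 : γ + (n:ℝ) + 1/2 = n * (1 + (γ + 1/2)/n) := by field_simp; ring
      have h2 : Real.log (γ + n + 1/2) = Real.log n + Real.log (1 + (γ + 1/2)/n) := by
        rw [h1, Real.log_mul (ne_of_gt hn0) (by positivity)]
      simp only [Lf, h2]; ring
    rw [hsplit a ha, hsplit b hb]
    ring
  have lim : Tendsto (fun n : ℕ =>
      (b - a) - ((n:ℝ) + (b + 1/2)) * Real.log (1 + (b + 1/2) / n)
        + ((n:ℝ) + (a + 1/2)) * Real.log (1 + (a + 1/2) / n)) atTop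
      (𝓝 ((b - a) - (b + 1/2) + (a + 1/2))) :=
    ((tendsto_const_nhds.sub (tendsto_aux (b + 1/2) (by linarith))).add
      (tendsto_aux (a + 1/2) (by linarith)))
  have : (b - a) - (b + 1/2) + (a + 1/2) = 0 := by ring
  rw [this] at lim
  exact lim.congr' key

lemma f_mono {a b : ℝ} (ha : 1/2 < a) (hab : a ≤ b) :
    Real.log (Real.Gamma a) - Lf (a - 1/2) ≤ Real.log (Real.Gamma b) - Lf (b - 1/2) := by
  have ha0 : 0 < a := by linarith
  have hb0 : 0 < b := by linarith
  have hD : Tendsto (fun n => Real.BohrMollerup.logGammaSeq b n -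
      Real.BohrMollerup.logGammaSeq a n) atTop
      (𝓝 (Real.log (Real.Gamma b) - Real.log (Real.Gamma a))) :=
    (Real.BohrMollerup.tendsto_log_gamma hb0).sub (Real.BohrMollerup.tendsto_log_gamma ha0)
  have hE := tendsto_E ha0 hb0
  have key : ∀ n : ℕ,
      Lf (b - 1/2) - Lf (a - 1/2) +
        ((b - a) * Real.log n - Lf (b + n + 1/2) + Lf (a + n + 1/2)) ≤
      Real.BohrMollerup.logGammaSeq b n - Real.BohrMollerup.logGammaSeq a n := by
    intro n
    have hsum : ∑ m ∈ range (n + 1), (Real.log (b + m) - Real.log (a + m)) ≤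
        (Lf (b + (n+1) - 1/2) - Lf (a + (n+1) - 1/2)) - (Lf (b + 0 - 1/2) - Lf (a + 0 - 1/2)) := by
      have tel := Finset.sum_range_sub (fun m : ℕ => Lf (b + m - 1/2) - Lf (a + m - 1/2)) (n + 1)
      push_cast at tel
      rw [← tel]
      apply Finset.sum_le_sum
      intro m _
      have hma : a + m ∈ Ioi (1/2 : ℝ) := by
        simp only [Set.mem_Ioi]; have : (0:ℝ) ≤ m := Nat.cast_nonneg m; linarith
      have hmb : b + m ∈ Ioi (1/2 : ℝ) := by
        simp only [Set.mem_Ioi]; have : (0:ℝ) ≤ m := Nat.cast_nonneg m; linarith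
      have := phi_mono hma hmb (by linarith)
      simp only at this
      have e1 : a + m + 1/2 = a + ((m:ℝ)+1) - 1/2 := by ring
      have e2 : b + m + 1/2 = b + ((m:ℝ)+1) - 1/2 := by ring
      rw [e1, e2] at this
      linarith
    simp only [Real.BohrMollerup.logGammaSeq]
    have expand : (b * Real.log n + Real.log n.factorial - ∑ m ∈ range (n+1), Real.log (b + m))
        - (a * Real.log n + Real.log n.factorial - ∑ m ∈ range (n+1), Real.log (a + m))
        = (b - a) * Real.log n - ∑ m ∈ range (n+1), (Real.log (b + m) - Real.log (a + m)) := by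
      rw [Finset.sum_sub_distrib]; ring
    rw [expand]
    have c1 : b + ((n:ℝ)+1) - 1/2 = b + n + 1/2 := by ring
    have c2 : a + ((n:ℝ)+1) - 1/2 = a + n + 1/2 := by ring
    have c3 : b + (0:ℝ) - 1/2 = b - 1/2 := by ring
    have c4 : a + (0:ℝ) - 1/2 = a - 1/2 := by ring
    rw [c1, c2, c3, c4] at hsum
    linarith
  have final := le_of_tendsto_of_tendsto'
    ((tendsto_const_nhds (x := Lf (b - 1/2) - Lf (a - 1/2))).add hE) hD key
  rw [add_zero] at final
  linarith

lemma tendsto_fn : Tendsto (fun n : ℕ => Real.log (n !) - Lf ((n:ℝ) + 1/2)) atTop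
    (𝓝 (Real.log (Real.sqrt (2 * π)))) := by
  have key : ∀ᶠ n : ℕ in atTop,
      Real.log (Stirling.stirlingSeq n) + (1/2) * Real.log 2 + 1/2
        - ((n:ℝ) + 1/2) * Real.log (1 + (1/2 : ℝ) / n)
      = Real.log (n !) - Lf ((n:ℝ) + 1/2) := by
    filter_upwards [eventually_ge_atTop 1] with n hn
    have hn0 : (0:ℝ) < n := by exact_mod_cast hn
    have hfac : (0:ℝ) < (n ! : ℝ) := by exact_mod_cast n.factorial_pos
    have hden : (0:ℝ) < Real.sqrt (2 * n) * ((n : ℝ) / Real.exp 1) ^ n := by positivity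
    have hlogs : Real.log (Stirling.stirlingSeq n)
        = Real.log (n !) - ((1/2) * Real.log 2 + (1/2) * Real.log n)
          - n * (Real.log n - 1) := by
      rw [Stirling.stirlingSeq, Real.log_div (ne_of_gt hfac) (ne_of_gt hden),
        Real.log_mul (by positivity) (by positivity), Real.log_sqrt (by positivity),
        Real.log_pow, Real.log_mul (by norm_num) (ne_of_gt hn0),
        Real.log_div (ne_of_gt hn0) (by positivity), Real.log_exp]
      ring
    have hsplit : Real.log ((n:ℝ) + 1/2) = Real.log n + Real.log (1 + (1/2 : ℝ)/n) := by
      have h1 : (n:ℝ) + 1/2 = n * (1 + (1/2 : ℝ)/n) := by field_simp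
      rw [h1, Real.log_mul (ne_of_gt hn0) (by positivity)]
    simp only [Lf, hsplit, hlogs]
    ring
  have hlim : Tendsto (fun n : ℕ =>
      Real.log (Stirling.stirlingSeq n) + (1/2) * Real.log 2 + 1/2
        - ((n:ℝ) + 1/2) * Real.log (1 + (1/2 : ℝ) / n)) atTop
      (𝓝 (Real.log (Real.sqrt π) + (1/2) * Real.log 2 + 1/2 - 1/2)) := by
    have t1 : Tendsto (fun n : ℕ => Real.log (Stirling.stirlingSeq n)) atTop
        (𝓝 (Real.log (Real.sqrt π))) :=
      ((Real.continuousAt_log (by positivity)).tendsto.comp Stirling.tendsto_stirlingSeq_sqrt_pi)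
    exact ((t1.add tendsto_const_nhds).add tendsto_const_nhds).sub
      (tendsto_aux (1/2) (by norm_num))
  have : Real.log (Real.sqrt π) + (1/2) * Real.log 2 + 1/2 - 1/2
      = Real.log (Real.sqrt (2 * π)) := by
    rw [Real.log_sqrt pi_pos.le, Real.log_sqrt (by positivity),
      Real.log_mul (by norm_num) (ne_of_gt pi_pos)]
    ring
  rw [this] at hlim
  exact hlim.congr' key

theorem stmt_0 (x : ℝ) (hx : 0 < x) :
    Real.sqrt (2 * Real.exp 1) * ((x + 1/2) / Real.exp 1) ^ (x + 1/2) ≤ Real.Gamma (x + 1) ∧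
    Real.Gamma (x + 1) ≤ Real.sqrt (2 * Real.pi) * ((x + 1/2) / Real.exp 1) ^ (x + 1/2) := by
  have hbase : (0:ℝ) < (x + 1/2) / Real.exp 1 := by positivity
  have hGpos : 0 < Real.Gamma (x + 1) := Real.Gamma_pos_of_pos (by linarith)
  have hlog_rhs : ∀ c : ℝ, 0 < c →
      Real.log (Real.sqrt c * ((x + 1/2) / Real.exp 1) ^ (x + 1/2))
        = Real.log (Real.sqrt c) + Lf (x + 1/2) := by
    intro c hc
    rw [Real.log_mul (by positivity) (by positivity : ((x + 1/2) / Real.exp 1) ^ (x + 1/2) ≠ 0),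
      Real.log_rpow hbase, Real.log_div (by linarith) (Real.exp_ne_zero 1), Real.log_exp]
    simp only [Lf]; ring
  constructor
  · -- lower bound
    have h := f_mono (a := 1) (b := x + 1) (by norm_num) (by linarith)
    rw [Real.Gamma_one, Real.log_one] at h
    have e1 : (1:ℝ) - 1/2 = 1/2 := by norm_num
    have e2 : x + 1 - 1/2 = x + 1/2 := by ring
    rw [e1, e2] at h
    have hval : Real.log (Real.sqrt (2 * Real.exp 1)) = - Lf (1/2) := by
      rw [Real.log_sqrt (by positivity), Real.log_mul (by norm_num) (Real.exp_ne_zero 1),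
        Real.log_exp]
      simp only [Lf]
      rw [show Real.log (1/2 : ℝ) = - Real.log 2 by rw [one_div, Real.log_inv]]
      ring
    have hlogle : Real.log (Real.sqrt (2 * Real.exp 1) * ((x + 1/2) / Real.exp 1) ^ (x + 1/2))
        ≤ Real.log (Real.Gamma (x + 1)) := by
      rw [hlog_rhs _ (by positivity), hval]; linarith
    calc Real.sqrt (2 * Real.exp 1) * ((x + 1/2) / Real.exp 1) ^ (x + 1/2)
        = Real.exp (Real.log (Real.sqrt (2 * Real.exp 1) *
            ((x + 1/2) / Real.exp 1) ^ (x + 1/2))) := by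
          rw [Real.exp_log (by positivity)]
      _ ≤ Real.exp (Real.log (Real.Gamma (x + 1))) := Real.exp_le_exp.2 hlogle
      _ = Real.Gamma (x + 1) := Real.exp_log hGpos
  · -- upper bound
    have hup : Real.log (Real.Gamma (x + 1)) - Lf (x + 1/2)
        ≤ Real.log (Real.sqrt (2 * π)) := by
      apply ge_of_tendsto tendsto_fn
      filter_upwards [eventually_ge_atTop ⌈x⌉₊] with n hn
      have hxn : x ≤ n := le_trans (Nat.le_ceil x) (by exact_mod_cast hn)
      have h := f_mono (a := x + 1) (b := (n:ℝ) + 1) (by linarith) (by linarith)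
      rw [Real.Gamma_nat_eq_factorial] at h
      have e2 : x + 1 - 1/2 = x + 1/2 := by ring
      have e3 : (n:ℝ) + 1 - 1/2 = (n:ℝ) + 1/2 := by ring
      rw [e2, e3] at h
      linarith
    have hlogle : Real.log (Real.Gamma (x + 1))
        ≤ Real.log (Real.sqrt (2 * π) * ((x + 1/2) / Real.exp 1) ^ (x + 1/2)) := by
      rw [hlog_rhs _ (by positivity)]; linarith
    calc Real.Gamma (x + 1) = Real.exp (Real.log (Real.Gamma (x + 1))) :=
          (Real.exp_log hGpos).symm
      _ ≤ Real.exp (Real.log (Real.sqrt (2 * π) * ((x + 1/2) / Real.exp 1) ^ (x + 1/2))) :=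
          Real.exp_le_exp.2 hlogle
      _ = Real.sqrt (2 * π) * ((x + 1/2) / Real.exp 1) ^ (x + 1/2) := by
          rw [Real.exp_log (by positivity)]
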